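/- Let V₁, V₂ be nontrivial real Hilbert spaces with G₁ ≤ O(V₁), G₂ ≤ O(V₂). Then the Euclidean distortion of the metric quotient (V₁ ⊕ V₂)/∕(G₁ × G₂) equals max{c₂(V₁/∕G₁), c₂(V₂/∕G₂)}. -/

import Mathlib

open scoped ENNReal

universe u

/-- The metric-quotient distance associated to an orbit map: the infimal distance between
the orbit closures of `x` and `y`. -/
noncomputable def qdOrb {X : Type*} [MetricSpace X] (orb : X → Set X) (x y : X) : ℝ :=
  sInf {r : ℝ | ∃ p ∈ closure (orb x), ∃ q ∈ closure (orb y), r = dist p q}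

/-- The Euclidean distortion `c₂` of a set `X` with (pseudo)distance `ρ`: the infimum over
all bilipschitz maps of `(X, ρ)` into a real Hilbert space (every real Hilbert space being
isometrically isomorphic to some `ℓ²(κ; ℝ)`) of the distortion `β/α`; `∞` if there is no
such map. -/
noncomputable def euclideanDistortion (X : Type u) (ρ : X → X → ℝ) : ℝ≥0∞ :=
  sInf {c : ℝ≥0∞ | ∃ (κ : Type u) (φ : X → lp (fun _ : κ => ℝ) 2) (α β : ℝ), 0 < α ∧
    (∀ x y : X, α * ρ x y ≤ ‖φ x - φ y‖ ∧ ‖φ x - φ y‖ ≤ β * ρ x y) ∧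
    ENNReal.ofReal (β / α) ≤ c}

lemma hasSum_sumElim {κ₁ κ₂ : Type*} {g : κ₁ → ℝ} {h : κ₂ → ℝ} {a b : ℝ}
    (hg : HasSum g a) (hh : HasSum h b) : HasSum (Sum.elim g h) (a + b) := by
  refine HasSum.add_isCompl Set.isCompl_range_inl_range_inr ?_ ?_
  · exact (Equiv.ofInjective (Sum.inl : κ₁ → κ₁ ⊕ κ₂)
      Sum.inl_injective).hasSum_iff.mp hg
  · exact (Equiv.ofInjective (Sum.inr : κ₂ → κ₁ ⊕ κ₂)
      Sum.inr_injective).hasSum_iff.mp hh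

noncomputable def glueLp {κ₁ κ₂ : Type u} (f : lp (fun _ : κ₁ => ℝ) 2)
    (g : lp (fun _ : κ₂ => ℝ) 2) : lp (fun _ : κ₁ ⊕ κ₂ => ℝ) 2 :=
  ⟨Sum.elim ⇑f ⇑g, by
    apply memℓp_gen
    have h2 : (0:ℝ) < (2 : ℝ≥0∞).toReal := by norm_num
    have := (hasSum_sumElim ((lp.memℓp f).summable h2).hasSum
      ((lp.memℓp g).summable h2).hasSum).summable
    apply this.congr
    rintro (i | j) <;> rfl⟩

lemma glueLp_sub {κ₁ κ₂ : Type u} (f f' : lp (fun _ : κ₁ => ℝ) 2)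
    (g g' : lp (fun _ : κ₂ => ℝ) 2) :
    glueLp f g - glueLp f' g' = glueLp (f - f') (g - g') := by
  ext (i | j) <;> simp [glueLp, lp.coeFn_sub] <;> rfl

lemma glueLp_norm_sq {κ₁ κ₂ : Type u} (f : lp (fun _ : κ₁ => ℝ) 2)
    (g : lp (fun _ : κ₂ => ℝ) 2) :
    ‖glueLp f g‖ ^ 2 = ‖f‖ ^ 2 + ‖g‖ ^ 2 := by
  have h2 : (0:ℝ) < (2 : ℝ≥0∞).toReal := by norm_num
  have h1 := lp.hasSum_norm h2 (glueLp f g)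
  have h3 := hasSum_sumElim (lp.hasSum_norm h2 f) (lp.hasSum_norm h2 g)
  have h4 : HasSum (fun i => ‖glueLp f g i‖ ^ (2:ℝ≥0∞).toReal)
      (‖f‖ ^ (2:ℝ≥0∞).toReal + ‖g‖ ^ (2:ℝ≥0∞).toReal) := by
    apply h3.congr_fun
    rintro (i | j) <;> rfl
  have h5 := h1.unique h4
  have ht : (2:ℝ≥0∞).toReal = ((2:ℕ):ℝ) := by norm_num
  rw [ht] at h5
  simpa [Real.rpow_natCast] using h5

section basic
variable {X : Type*} [MetricSpace X] (orb : X → Set X)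

lemma qdSet_bddBelow (x y : X) :
    BddBelow {r : ℝ | ∃ p ∈ closure (orb x), ∃ q ∈ closure (orb y), r = dist p q} :=
  ⟨0, by rintro r ⟨p, _, q, _, rfl⟩; exact dist_nonneg⟩

lemma qdOrb_nonneg (x y : X) : 0 ≤ qdOrb orb x y :=
  Real.sInf_nonneg (by rintro r ⟨p, _, q, _, rfl⟩; exact dist_nonneg)

lemma qdOrb_le_dist {x y p q : X} (hp : p ∈ closure (orb x)) (hq : q ∈ closure (orb y)) :
    qdOrb orb x y ≤ dist p q :=
  csInf_le (qdSet_bddBelow orb x y) ⟨p, hp, q, hq, rfl⟩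

end basic

section single
variable {V : Type u} [NormedAddCommGroup V] [InnerProductSpace ℝ V]
  (G : Subgroup (V ≃ₗᵢ[ℝ] V))

lemma orb_self (x : V) : x ∈ {y : V | ∃ g ∈ G, g x = y} := ⟨1, G.one_mem, rfl⟩

lemma orb_zero : {y : V | ∃ g ∈ G, g (0:V) = y} = {(0:V)} := by
  ext z
  simp only [Set.mem_setOf_eq, Set.mem_singleton_iff]
  constructor
  · rintro ⟨g, _, rfl⟩; simp
  · rintro rfl; exact ⟨1, G.one_mem, by simp⟩

lemma qdG_zero_zero : qdOrb (fun x => {y : V | ∃ g ∈ G, g x = y}) 0 0 = 0 := by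
  refine le_antisymm ?_ (qdOrb_nonneg _ _ _)
  have h0 : (0:V) ∈ closure {y : V | ∃ g ∈ G, g (0:V) = y} :=
    subset_closure (orb_self G 0)
  simpa using qdOrb_le_dist (fun x => {y : V | ∃ g ∈ G, g x = y}) h0 h0

lemma qdG_zero_norm (y : V) : qdOrb (fun x => {y : V | ∃ g ∈ G, g x = y}) 0 y = ‖y‖ := by
  refine le_antisymm ?_ ?_
  · have h0 : (0:V) ∈ closure {z : V | ∃ g ∈ G, g (0:V) = z} :=
      subset_closure (orb_self G 0)
    have hy : y ∈ closure {z : V | ∃ g ∈ G, g y = z} := subset_closure (orb_self G y)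
    simpa using qdOrb_le_dist (fun x => {y : V | ∃ g ∈ G, g x = y}) h0 hy
  · refine le_csInf ⟨dist (0:V) y, (0:V), subset_closure (orb_self G 0),
      y, subset_closure (orb_self G y), rfl⟩ ?_
    rintro r ⟨p, hp, q, hq, rfl⟩
    have hp' : p ∈ closure {z : V | ∃ g ∈ G, g (0:V) = z} := hp
    rw [orb_zero, closure_singleton, Set.mem_singleton_iff] at hp'
    subst hp'
    have hq'' : q ∈ closure {z : V | ∃ g ∈ G, g y = z} := hq
    have hq' : ‖q‖ = ‖y‖ := by
      have hsub : {z : V | ∃ g ∈ G, g y = z} ⊆ {z : V | ‖z‖ = ‖y‖} := by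
        rintro z ⟨g, _, rfl⟩; simp
      have hcl : IsClosed {z : V | ‖z‖ = ‖y‖} :=
        isClosed_eq continuous_norm continuous_const
      exact (hcl.closure_subset_iff.mpr hsub) hq''
    rw [dist_zero_left, hq']

end single

section sqrtlem

lemma sqrt_sq_add_sq_le {a b : ℝ} (ha : 0 ≤ a) (hb : 0 ≤ b) :
    Real.sqrt (a ^ 2 + b ^ 2) ≤ a + b := by
  have h : a ^ 2 + b ^ 2 ≤ (a + b) ^ 2 := by nlinarith
  calc Real.sqrt (a ^ 2 + b ^ 2) ≤ Real.sqrt ((a + b) ^ 2) := Real.sqrt_le_sqrt h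
    _ = a + b := Real.sqrt_sq (by positivity)

lemma le_sqrt_sq_add_sq_left {a b : ℝ} (ha : 0 ≤ a) : a ≤ Real.sqrt (a ^ 2 + b ^ 2) := by
  have h : a ^ 2 ≤ a ^ 2 + b ^ 2 := by nlinarith [sq_nonneg b]
  calc a = Real.sqrt (a ^ 2) := (Real.sqrt_sq ha).symm
    _ ≤ _ := Real.sqrt_le_sqrt h

lemma le_sqrt_sq_add_sq_right {a b : ℝ} (hb : 0 ≤ b) : b ≤ Real.sqrt (a ^ 2 + b ^ 2) := by
  have h : b ^ 2 ≤ a ^ 2 + b ^ 2 := by nlinarith [sq_nonneg a]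
  calc b = Real.sqrt (b ^ 2) := (Real.sqrt_sq hb).symm
    _ ≤ _ := Real.sqrt_le_sqrt h

lemma sqrt_perturb {a b ε : ℝ} (ha : 0 ≤ a) (hb : 0 ≤ b) (hε : 0 ≤ ε) :
    Real.sqrt ((a + ε) ^ 2 + (b + ε) ^ 2) ≤ Real.sqrt (a ^ 2 + b ^ 2) + 2 * ε := by
  have ha' := le_sqrt_sq_add_sq_left (b := b) ha
  have hb' := le_sqrt_sq_add_sq_right (a := a) hb
  have hsq : Real.sqrt (a ^ 2 + b ^ 2) ^ 2 = a ^ 2 + b ^ 2 :=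
    Real.sq_sqrt (by positivity)
  have h : (a + ε) ^ 2 + (b + ε) ^ 2 ≤ (Real.sqrt (a ^ 2 + b ^ 2) + 2 * ε) ^ 2 := by
    nlinarith [Real.sqrt_nonneg (a ^ 2 + b ^ 2)]
  calc Real.sqrt ((a + ε) ^ 2 + (b + ε) ^ 2)
      ≤ Real.sqrt ((Real.sqrt (a ^ 2 + b ^ 2) + 2 * ε) ^ 2) := Real.sqrt_le_sqrt h
    _ = _ := Real.sqrt_sq (by positivity)

end sqrtlem

section prod
variable {V₁ V₂ : Type u}
  [NormedAddCommGroup V₁] [InnerProductSpace ℝ V₁]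
  [NormedAddCommGroup V₂] [InnerProductSpace ℝ V₂]
  (G₁ : Subgroup (V₁ ≃ₗᵢ[ℝ] V₁)) (G₂ : Subgroup (V₂ ≃ₗᵢ[ℝ] V₂))

local notation "E" => WithLp 2 (V₁ × V₂)

lemma dist_fst_le (p q : E) : dist p.fst q.fst ≤ dist p q := by
  rw [WithLp.prod_dist_eq_of_L2]
  exact le_sqrt_sq_add_sq_left dist_nonneg

lemma dist_snd_le (p q : E) : dist p.snd q.snd ≤ dist p q := by
  rw [WithLp.prod_dist_eq_of_L2]
  exact le_sqrt_sq_add_sq_right dist_nonneg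

lemma mem_closure_orb_prod {x p : E} :
    p ∈ closure {y : E | ∃ g₁ ∈ G₁, ∃ g₂ ∈ G₂,
        y = (WithLp.equiv 2 (V₁ × V₂)).symm
          (g₁ ((WithLp.equiv 2 (V₁ × V₂)) x).1, g₂ ((WithLp.equiv 2 (V₁ × V₂)) x).2)} ↔
      p.fst ∈ closure {y : V₁ | ∃ g ∈ G₁, g x.fst = y} ∧
      p.snd ∈ closure {y : V₂ | ∃ g ∈ G₂, g x.snd = y} := by
  constructor
  · intro h
    constructor
    · rw [Metric.mem_closure_iff] at h ⊢
      intro ε hε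
      obtain ⟨b, hb, hd⟩ := h ε hε
      obtain ⟨g₁, hg₁, g₂, hg₂, rfl⟩ := hb
      refine ⟨g₁ x.fst, ⟨g₁, hg₁, rfl⟩, ?_⟩
      have hle := dist_fst_le p ((WithLp.equiv 2 (V₁ × V₂)).symm
        (g₁ ((WithLp.equiv 2 (V₁ × V₂)) x).1, g₂ ((WithLp.equiv 2 (V₁ × V₂)) x).2))
      exact lt_of_le_of_lt hle hd
    · rw [Metric.mem_closure_iff] at h ⊢
      intro ε hε
      obtain ⟨b, hb, hd⟩ := h ε hε
      obtain ⟨g₁, hg₁, g₂, hg₂, rfl⟩ := hb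
      refine ⟨g₂ x.snd, ⟨g₂, hg₂, rfl⟩, ?_⟩
      have hle := dist_snd_le p ((WithLp.equiv 2 (V₁ × V₂)).symm
        (g₁ ((WithLp.equiv 2 (V₁ × V₂)) x).1, g₂ ((WithLp.equiv 2 (V₁ × V₂)) x).2))
      exact lt_of_le_of_lt hle hd
  · rintro ⟨h1, h2⟩
    rw [Metric.mem_closure_iff] at h1 h2 ⊢
    intro ε hε
    obtain ⟨o₁, ho₁, hd₁⟩ := h1 (ε / 2) (by positivity)
    obtain ⟨o₂, ho₂, hd₂⟩ := h2 (ε / 2) (by positivity)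
    obtain ⟨g₁, hg₁, rfl⟩ := ho₁
    obtain ⟨g₂, hg₂, rfl⟩ := ho₂
    refine ⟨(WithLp.equiv 2 (V₁ × V₂)).symm (g₁ x.fst, g₂ x.snd),
      ⟨g₁, hg₁, g₂, hg₂, rfl⟩, ?_⟩
    rw [WithLp.prod_dist_eq_of_L2]
    calc Real.sqrt (dist p.fst (g₁ x.fst) ^ 2 + dist p.snd (g₂ x.snd) ^ 2)
        ≤ dist p.fst (g₁ x.fst) + dist p.snd (g₂ x.snd) :=
          sqrt_sq_add_sq_le dist_nonneg dist_nonneg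
      _ < ε := by linarith

lemma qd_prod_eq (x y : E) :
    qdOrb (fun x => {y : E | ∃ g₁ ∈ G₁, ∃ g₂ ∈ G₂,
        y = (WithLp.equiv 2 (V₁ × V₂)).symm
          (g₁ ((WithLp.equiv 2 (V₁ × V₂)) x).1, g₂ ((WithLp.equiv 2 (V₁ × V₂)) x).2)}) x y
    = Real.sqrt (qdOrb (fun x => {y : V₁ | ∃ g ∈ G₁, g x = y}) x.fst y.fst ^ 2
        + qdOrb (fun x => {y : V₂ | ∃ g ∈ G₂, g x = y}) x.snd y.snd ^ 2) := by
  set O₁ : V₁ → Set V₁ := fun x => {y : V₁ | ∃ g ∈ G₁, g x = y} with hO₁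
  set O₂ : V₂ → Set V₂ := fun x => {y : V₂ | ∃ g ∈ G₂, g x = y} with hO₂
  set Op : E → Set E := fun x => {y : E | ∃ g₁ ∈ G₁, ∃ g₂ ∈ G₂,
      y = (WithLp.equiv 2 (V₁ × V₂)).symm
        (g₁ ((WithLp.equiv 2 (V₁ × V₂)) x).1, g₂ ((WithLp.equiv 2 (V₁ × V₂)) x).2)} with hOp
  set a := qdOrb O₁ x.fst y.fst with ha
  set b := qdOrb O₂ x.snd y.snd with hb
  have ha0 : 0 ≤ a := qdOrb_nonneg _ _ _
  have hb0 : 0 ≤ b := qdOrb_nonneg _ _ _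
  have hS₁ne : {r : ℝ | ∃ p ∈ closure (O₁ x.fst), ∃ q ∈ closure (O₁ y.fst),
      r = dist p q}.Nonempty :=
    ⟨dist x.fst y.fst, x.fst, subset_closure (orb_self G₁ _),
      y.fst, subset_closure (orb_self G₁ _), rfl⟩
  have hS₂ne : {r : ℝ | ∃ p ∈ closure (O₂ x.snd), ∃ q ∈ closure (O₂ y.snd),
      r = dist p q}.Nonempty :=
    ⟨dist x.snd y.snd, x.snd, subset_closure (orb_self G₂ _),
      y.snd, subset_closure (orb_self G₂ _), rfl⟩
  refine le_antisymm ?_ ?_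
  · refine le_of_forall_pos_le_add fun ε hε => ?_
    obtain ⟨r₁, hr₁S, hr₁⟩ := exists_lt_of_csInf_lt hS₁ne
      (lt_add_of_pos_right a (by positivity : (0:ℝ) < ε / 2))
    obtain ⟨r₂, hr₂S, hr₂⟩ := exists_lt_of_csInf_lt hS₂ne
      (lt_add_of_pos_right b (by positivity : (0:ℝ) < ε / 2))
    obtain ⟨p₁, hp₁, q₁, hq₁, rfl⟩ := hr₁S
    obtain ⟨p₂, hp₂, q₂, hq₂, rfl⟩ := hr₂S
    have hP : ((WithLp.equiv 2 (V₁ × V₂)).symm (p₁, p₂)) ∈ closure (Op x) :=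
      (mem_closure_orb_prod G₁ G₂).mpr ⟨hp₁, hp₂⟩
    have hQ : ((WithLp.equiv 2 (V₁ × V₂)).symm (q₁, q₂)) ∈ closure (Op y) :=
      (mem_closure_orb_prod G₁ G₂).mpr ⟨hq₁, hq₂⟩
    have hle := qdOrb_le_dist Op hP hQ
    have hdist : dist ((WithLp.equiv 2 (V₁ × V₂)).symm (p₁, p₂))
        ((WithLp.equiv 2 (V₁ × V₂)).symm (q₁, q₂))
        = Real.sqrt (dist p₁ q₁ ^ 2 + dist p₂ q₂ ^ 2) := by
      rw [WithLp.prod_dist_eq_of_L2]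
      rfl
    have hmono : Real.sqrt (dist p₁ q₁ ^ 2 + dist p₂ q₂ ^ 2)
        ≤ Real.sqrt ((a + ε / 2) ^ 2 + (b + ε / 2) ^ 2) := by
      apply Real.sqrt_le_sqrt
      have h1 : dist p₁ q₁ ^ 2 ≤ (a + ε / 2) ^ 2 := by
        apply pow_le_pow_left₀ dist_nonneg hr₁.le
      have h2 : dist p₂ q₂ ^ 2 ≤ (b + ε / 2) ^ 2 := by
        apply pow_le_pow_left₀ dist_nonneg hr₂.le
      linarith
    have hpert := sqrt_perturb ha0 hb0 (by positivity : (0:ℝ) ≤ ε / 2)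
    calc qdOrb Op x y ≤ Real.sqrt (dist p₁ q₁ ^ 2 + dist p₂ q₂ ^ 2) := by
          rw [← hdist]; exact hle
      _ ≤ Real.sqrt ((a + ε / 2) ^ 2 + (b + ε / 2) ^ 2) := hmono
      _ ≤ Real.sqrt (a ^ 2 + b ^ 2) + 2 * (ε / 2) := hpert
      _ = Real.sqrt (a ^ 2 + b ^ 2) + ε := by ring
  · refine le_csInf ?_ ?_
    · exact ⟨dist x y, x, subset_closure ⟨1, G₁.one_mem, 1, G₂.one_mem, by
        simp; rfl⟩, y, subset_closure ⟨1, G₁.one_mem, 1, G₂.one_mem, by simp; rfl⟩, rfl⟩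
    · rintro r ⟨p, hp, q, hq, rfl⟩
      obtain ⟨hp1, hp2⟩ := (mem_closure_orb_prod G₁ G₂).mp hp
      obtain ⟨hq1, hq2⟩ := (mem_closure_orb_prod G₁ G₂).mp hq
      have h1 : a ≤ dist p.fst q.fst := qdOrb_le_dist O₁ hp1 hq1
      have h2 : b ≤ dist p.snd q.snd := qdOrb_le_dist O₂ hp2 hq2
      rw [WithLp.prod_dist_eq_of_L2]
      apply Real.sqrt_le_sqrt
      have := pow_le_pow_left₀ ha0 h1 2
      have := pow_le_pow_left₀ hb0 h2 2
      linarith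

lemma qd_emb_fst (x y : V₁) :
    qdOrb (fun x => {y : E | ∃ g₁ ∈ G₁, ∃ g₂ ∈ G₂,
        y = (WithLp.equiv 2 (V₁ × V₂)).symm
          (g₁ ((WithLp.equiv 2 (V₁ × V₂)) x).1, g₂ ((WithLp.equiv 2 (V₁ × V₂)) x).2)})
      ((WithLp.equiv 2 (V₁ × V₂)).symm (x, 0)) ((WithLp.equiv 2 (V₁ × V₂)).symm (y, 0))
    = qdOrb (fun x => {y : V₁ | ∃ g ∈ G₁, g x = y}) x y := by
  rw [qd_prod_eq G₁ G₂]
  show Real.sqrt (qdOrb (fun x => {y : V₁ | ∃ g ∈ G₁, g x = y}) x y ^ 2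
    + qdOrb (fun x => {y : V₂ | ∃ g ∈ G₂, g x = y}) (0:V₂) (0:V₂) ^ 2) = _
  rw [qdG_zero_zero G₂]
  simp [Real.sqrt_sq (qdOrb_nonneg _ x y)]

lemma qd_emb_snd (x y : V₂) :
    qdOrb (fun x => {y : E | ∃ g₁ ∈ G₁, ∃ g₂ ∈ G₂,
        y = (WithLp.equiv 2 (V₁ × V₂)).symm
          (g₁ ((WithLp.equiv 2 (V₁ × V₂)) x).1, g₂ ((WithLp.equiv 2 (V₁ × V₂)) x).2)})
      ((WithLp.equiv 2 (V₁ × V₂)).symm (0, x)) ((WithLp.equiv 2 (V₁ × V₂)).symm (0, y))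
    = qdOrb (fun x => {y : V₂ | ∃ g ∈ G₂, g x = y}) x y := by
  rw [qd_prod_eq G₁ G₂]
  show Real.sqrt (qdOrb (fun x => {y : V₁ | ∃ g ∈ G₁, g x = y}) (0:V₁) (0:V₁) ^ 2
    + qdOrb (fun x => {y : V₂ | ∃ g ∈ G₂, g x = y}) x y ^ 2) = _
  rw [qdG_zero_zero G₁]
  simp [Real.sqrt_sq (qdOrb_nonneg _ x y)]

end prod

/-- for nontrivial real Hilbert spaces `V₁, V₂` and `G₁ ≤ O(V₁)`,
`G₂ ≤ O(V₂)`, the Euclidean distortion of `(V₁ ⊕ V₂)/∕(G₁ × G₂)` equals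
`max{c₂(V₁/∕G₁), c₂(V₂/∕G₂)}`. -/
theorem euclideanDistortion_product_quotient
    {V₁ V₂ : Type u}
    [NormedAddCommGroup V₁] [InnerProductSpace ℝ V₁] [CompleteSpace V₁] [Nontrivial V₁]
    [NormedAddCommGroup V₂] [InnerProductSpace ℝ V₂] [CompleteSpace V₂] [Nontrivial V₂]
    (G₁ : Subgroup (V₁ ≃ₗᵢ[ℝ] V₁)) (G₂ : Subgroup (V₂ ≃ₗᵢ[ℝ] V₂)) :
    euclideanDistortion (WithLp 2 (V₁ × V₂))
      (qdOrb (fun x => {y : WithLp 2 (V₁ × V₂) | ∃ g₁ ∈ G₁, ∃ g₂ ∈ G₂,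
        y = (WithLp.equiv 2 (V₁ × V₂)).symm
          (g₁ ((WithLp.equiv 2 (V₁ × V₂)) x).1, g₂ ((WithLp.equiv 2 (V₁ × V₂)) x).2)}))
    = max (euclideanDistortion V₁ (qdOrb (fun x => {y : V₁ | ∃ g ∈ G₁, g x = y})))
          (euclideanDistortion V₂ (qdOrb (fun x => {y : V₂ | ∃ g ∈ G₂, g x = y}))) := by
  classical
  unfold euclideanDistortion
  refine le_antisymm ?_ (le_sInf fun c hc => ?_)
  · -- upper bound : product distortion ≤ max
    by_cases htop : max
        (sInf {c : ℝ≥0∞ | ∃ (κ : Type u) (φ : V₁ → lp (fun _ : κ => ℝ) 2) (α β : ℝ), 0 < α ∧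
          (∀ x y : V₁, α * qdOrb (fun x => {y : V₁ | ∃ g ∈ G₁, g x = y}) x y ≤ ‖φ x - φ y‖ ∧
            ‖φ x - φ y‖ ≤ β * qdOrb (fun x => {y : V₁ | ∃ g ∈ G₁, g x = y}) x y) ∧
          ENNReal.ofReal (β / α) ≤ c})
        (sInf {c : ℝ≥0∞ | ∃ (κ : Type u) (φ : V₂ → lp (fun _ : κ => ℝ) 2) (α β : ℝ), 0 < α ∧
          (∀ x y : V₂, α * qdOrb (fun x => {y : V₂ | ∃ g ∈ G₂, g x = y}) x y ≤ ‖φ x - φ y‖ ∧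
            ‖φ x - φ y‖ ≤ β * qdOrb (fun x => {y : V₂ | ∃ g ∈ G₂, g x = y}) x y) ∧
          ENNReal.ofReal (β / α) ≤ c}) = ⊤
    · rw [htop]; exact le_top
    refine le_of_forall_gt_imp_ge_of_dense fun b hb => ?_
    have h₁ := (le_max_left _ _).trans_lt hb
    have h₂ := (le_max_right _ _).trans_lt hb
    obtain ⟨c₁, hc₁, hc₁b⟩ := sInf_lt_iff.mp h₁
    obtain ⟨c₂, hc₂, hc₂b⟩ := sInf_lt_iff.mp h₂
    obtain ⟨κ₁, φ₁, α₁, β₁, hα₁, hi₁, hle₁⟩ := hc₁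
    obtain ⟨κ₂, φ₂, α₂, β₂, hα₂, hi₂, hle₂⟩ := hc₂
    -- the distortion ratios are at least 1
    obtain ⟨y₁, hy₁⟩ := exists_ne (0 : V₁)
    obtain ⟨y₂, hy₂⟩ := exists_ne (0 : V₂)
    have hρ₁pos : 0 < qdOrb (fun x => {y : V₁ | ∃ g ∈ G₁, g x = y}) 0 y₁ := by
      rw [qdG_zero_norm G₁]; exact norm_pos_iff.mpr hy₁
    have hρ₂pos : 0 < qdOrb (fun x => {y : V₂ | ∃ g ∈ G₂, g x = y}) 0 y₂ := by
      rw [qdG_zero_norm G₂]; exact norm_pos_iff.mpr hy₂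
    have hβα₁ : α₁ ≤ β₁ := by
      have h := hi₁ 0 y₁
      nlinarith [h.1.trans h.2, hρ₁pos]
    have hβα₂ : α₂ ≤ β₂ := by
      have h := hi₂ 0 y₂
      nlinarith [h.1.trans h.2, hρ₂pos]
    have hc₁1 : (1:ℝ) ≤ β₁ / α₁ := (one_le_div hα₁).mpr hβα₁
    have hc₂1 : (1:ℝ) ≤ β₂ / α₂ := (one_le_div hα₂).mpr hβα₂
    set M : ℝ := max (β₁ / α₁) (β₂ / α₂) with hM
    have hM0 : 0 ≤ M := le_trans zero_le_one (le_trans hc₁1 (le_max_left _ _))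
    refine le_trans (sInf_le ?_) (max_le hc₁b.le hc₂b.le)
    refine ⟨κ₁ ⊕ κ₂, fun x => glueLp (α₁⁻¹ • φ₁ x.fst) (α₂⁻¹ • φ₂ x.snd), 1, M,
      one_pos, fun x y => ?_, ?_⟩
    · have hdiff : glueLp (α₁⁻¹ • φ₁ x.fst) (α₂⁻¹ • φ₂ x.snd)
          - glueLp (α₁⁻¹ • φ₁ y.fst) (α₂⁻¹ • φ₂ y.snd)
          = glueLp (α₁⁻¹ • φ₁ x.fst - α₁⁻¹ • φ₁ y.fst) (α₂⁻¹ • φ₂ x.snd - α₂⁻¹ • φ₂ y.snd) :=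
        glueLp_sub _ _ _ _
      set u := α₁⁻¹ • φ₁ x.fst - α₁⁻¹ • φ₁ y.fst with hu'
      set v := α₂⁻¹ • φ₂ x.snd - α₂⁻¹ • φ₂ y.snd with hv'
      have hnorm_sq : ‖glueLp u v‖ ^ 2 = ‖u‖ ^ 2 + ‖v‖ ^ 2 := glueLp_norm_sq _ _
      have hu : ‖u‖ = α₁⁻¹ * ‖φ₁ x.fst - φ₁ y.fst‖ := by
        rw [hu', ← smul_sub, norm_smul, Real.norm_eq_abs, abs_of_pos (inv_pos.mpr hα₁)]
      have hv : ‖v‖ = α₂⁻¹ * ‖φ₂ x.snd - φ₂ y.snd‖ := by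
        rw [hv', ← smul_sub, norm_smul, Real.norm_eq_abs, abs_of_pos (inv_pos.mpr hα₂)]
      set ρ₁ := qdOrb (fun x => {y : V₁ | ∃ g ∈ G₁, g x = y}) x.fst y.fst with hρ₁
      set ρ₂ := qdOrb (fun x => {y : V₂ | ∃ g ∈ G₂, g x = y}) x.snd y.snd with hρ₂
      have hρ₁0 : 0 ≤ ρ₁ := qdOrb_nonneg _ _ _
      have hρ₂0 : 0 ≤ ρ₂ := qdOrb_nonneg _ _ _
      have hA : ρ₁ ≤ ‖u‖ := by
        rw [hu]
        calc ρ₁ = α₁⁻¹ * (α₁ * ρ₁) := by field_simp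
          _ ≤ α₁⁻¹ * ‖φ₁ x.fst - φ₁ y.fst‖ :=
            mul_le_mul_of_nonneg_left (hi₁ x.fst y.fst).1 (inv_nonneg.mpr hα₁.le)
      have hB : ρ₂ ≤ ‖v‖ := by
        rw [hv]
        calc ρ₂ = α₂⁻¹ * (α₂ * ρ₂) := by field_simp
          _ ≤ α₂⁻¹ * ‖φ₂ x.snd - φ₂ y.snd‖ :=
            mul_le_mul_of_nonneg_left (hi₂ x.snd y.snd).1 (inv_nonneg.mpr hα₂.le)
      have hA' : ‖u‖ ≤ (β₁ / α₁) * ρ₁ := by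
        rw [hu]
        calc α₁⁻¹ * ‖φ₁ x.fst - φ₁ y.fst‖ ≤ α₁⁻¹ * (β₁ * ρ₁) :=
            mul_le_mul_of_nonneg_left (hi₁ x.fst y.fst).2 (inv_nonneg.mpr hα₁.le)
          _ = (β₁ / α₁) * ρ₁ := by rw [div_eq_mul_inv]; ring
      have hB' : ‖v‖ ≤ (β₂ / α₂) * ρ₂ := by
        rw [hv]
        calc α₂⁻¹ * ‖φ₂ x.snd - φ₂ y.snd‖ ≤ α₂⁻¹ * (β₂ * ρ₂) :=
            mul_le_mul_of_nonneg_left (hi₂ x.snd y.snd).2 (inv_nonneg.mpr hα₂.le)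
          _ = (β₂ / α₂) * ρ₂ := by rw [div_eq_mul_inv]; ring
      rw [qd_prod_eq G₁ G₂ x y, hdiff]
      constructor
      · rw [one_mul]
        calc Real.sqrt (ρ₁ ^ 2 + ρ₂ ^ 2) ≤ Real.sqrt (‖u‖ ^ 2 + ‖v‖ ^ 2) := by
              apply Real.sqrt_le_sqrt
              have h1 := pow_le_pow_left₀ hρ₁0 hA 2
              have h2 := pow_le_pow_left₀ hρ₂0 hB 2
              linarith
          _ = ‖glueLp u v‖ := by rw [← hnorm_sq]; exact Real.sqrt_sq (norm_nonneg _)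
      · have hsq : ‖glueLp u v‖ ^ 2 ≤ (M * Real.sqrt (ρ₁ ^ 2 + ρ₂ ^ 2)) ^ 2 := by
          have hs : Real.sqrt (ρ₁ ^ 2 + ρ₂ ^ 2) ^ 2 = ρ₁ ^ 2 + ρ₂ ^ 2 :=
            Real.sq_sqrt (by positivity)
          have hMa : β₁ / α₁ ≤ M := le_max_left _ _
          have hMb : β₂ / α₂ ≤ M := le_max_right _ _
          have h1 : ‖u‖ ^ 2 ≤ (M * ρ₁) ^ 2 := by
            apply pow_le_pow_left₀ (norm_nonneg _)
            exact hA'.trans (mul_le_mul_of_nonneg_right hMa hρ₁0)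
          have h2 : ‖v‖ ^ 2 ≤ (M * ρ₂) ^ 2 := by
            apply pow_le_pow_left₀ (norm_nonneg _)
            exact hB'.trans (mul_le_mul_of_nonneg_right hMb hρ₂0)
          rw [hnorm_sq]
          have expand : (M * Real.sqrt (ρ₁ ^ 2 + ρ₂ ^ 2)) ^ 2
              = (M * ρ₁) ^ 2 + (M * ρ₂) ^ 2 := by
            rw [mul_pow, hs]; ring
          rw [expand]
          linarith
        have := Real.sqrt_le_sqrt hsq
        rwa [Real.sqrt_sq (norm_nonneg _), Real.sqrt_sq (by positivity)] at this
    · rw [div_one]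
      rcases max_cases (β₁ / α₁) (β₂ / α₂) with ⟨hMe, _⟩ | ⟨hMe, _⟩
      · rw [hM, hMe]
        exact le_trans hle₁ (le_max_left _ _)
      · rw [hM, hMe]
        exact le_trans hle₂ (le_max_right _ _)
  · -- lower bound : max ≤ product distortion
    obtain ⟨κ, φ, α, β, hα, hineq, hle⟩ := hc
    refine max_le (sInf_le ?_) (sInf_le ?_)
    · refine ⟨κ, fun x => φ ((WithLp.equiv 2 (V₁ × V₂)).symm (x, 0)), α, β, hα,
        fun x y => ?_, hle⟩
      have h := hineq ((WithLp.equiv 2 (V₁ × V₂)).symm (x, 0))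
        ((WithLp.equiv 2 (V₁ × V₂)).symm (y, 0))
      rwa [qd_emb_fst G₁ G₂] at h
    · refine ⟨κ, fun x => φ ((WithLp.equiv 2 (V₁ × V₂)).symm (0, x)), α, β, hα,
        fun x y => ?_, hle⟩
      have h := hineq ((WithLp.equiv 2 (V₁ × V₂)).symm (0, x))
        ((WithLp.equiv 2 (V₁ × V₂)).symm (0, y))
      rwa [qd_emb_snd G₁ G₂] at h
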